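/- arXiv:1711.10210 — 5 statements merged into one kernel-verified Lean document; each statement's English description precedes it below -/
import Mathlib

section
/- Let X, Y be integrable random variables with distribution functions F_X, F_Y. Suppose there exists t₀ ∈ ℝ such that F_X(t) ≤ F_Y(t) for all t < t₀ and F_X(t) ≥ F_Y(t) for all t ≥ t₀ (single crossing), and E[X] ≤ E[Y]. Then X ≤_icx Y. -/
open MeasureTheory ProbabilityTheory Set

noncomputable section

variable {Ω Ω' : Type*} [MeasurableSpace Ω] [MeasurableSpace Ω']

/-- Distribution function of a random variable. -/
def distFun (μ : Measure Ω) (X : Ω → ℝ) (x : ℝ) : ℝ := (μ {ω | X ω ≤ x}).toReal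

/-- Value-at-Risk at level α: `VaR_α(X) = inf {x | F_X(x) ≥ 1-α}`. -/
def VaR (μ : Measure Ω) (X : Ω → ℝ) (α : ℝ) : ℝ := sInf {x | 1 - α ≤ distFun μ X x}

/-- Range-Value-at-Risk with parameters α, β (for β > 0). -/
def RVaR (μ : Measure Ω) (X : Ω → ℝ) (α β : ℝ) : ℝ := (1/β) * ∫ s in α..(α+β), VaR μ X s

/-- Usual stochastic order. -/
def le_st (μ : Measure Ω) (X : Ω → ℝ) (ν : Measure Ω') (Y : Ω' → ℝ) : Prop :=
  ∀ f : ℝ → ℝ, Monotone f → Integrable (fun ω => f (X ω)) μ →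
    Integrable (fun ω => f (Y ω)) ν → ∫ ω, f (X ω) ∂μ ≤ ∫ ω, f (Y ω) ∂ν

/-- Convex order. -/
def le_cx (μ : Measure Ω) (X : Ω → ℝ) (ν : Measure Ω') (Y : Ω' → ℝ) : Prop :=
  ∀ f : ℝ → ℝ, ConvexOn ℝ univ f → Integrable (fun ω => f (X ω)) μ →
    Integrable (fun ω => f (Y ω)) ν → ∫ ω, f (X ω) ∂μ ≤ ∫ ω, f (Y ω) ∂ν

/-- Increasing convex order. -/
def le_icx (μ : Measure Ω) (X : Ω → ℝ) (ν : Measure Ω') (Y : Ω' → ℝ) : Prop :=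
  ∀ f : ℝ → ℝ, Monotone f → ConvexOn ℝ univ f → Integrable (fun ω => f (X ω)) μ →
    Integrable (fun ω => f (Y ω)) ν → ∫ ω, f (X ω) ∂μ ≤ ∫ ω, f (Y ω) ∂ν

/-- Admissible ceded loss functions: `0 ≤ f(x) ≤ x` with both `f` and the
retained loss `x - f(x)` increasing. -/
def Ceded (f : ℝ → ℝ) : Prop :=
  Monotone f ∧ Monotone (fun x => x - f x) ∧ ∀ x, 0 ≤ x → 0 ≤ f x ∧ f x ≤ x

/-- Layer reinsurance treaty with deductible `a` and upper bound `b`. -/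
def layer (a b x : ℝ) : ℝ := min (max (x - a) 0) b

/-- Joint distribution function of a random vector. -/
def jointCDF {n : ℕ} (μ : Measure Ω) (X : Fin n → Ω → ℝ) (x : Fin n → ℝ) : ℝ :=
  (μ {ω | ∀ i, X i ω ≤ x i}).toReal

/-- All one-dimensional marginals are uniform on [0,1]. -/
def uniformMarginals {n : ℕ} (ν : Measure (Fin n → ℝ)) : Prop :=
  ∀ i, Measure.map (fun u => u i) ν = volume.restrict (Icc (0:ℝ) 1)

/-- `C` is (the distribution function of) an `n`-dimensional copula. -/
def IsCopula {n : ℕ} (C : (Fin n → ℝ) → ℝ) : Prop :=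
  ∃ ν : Measure (Fin n → ℝ), IsProbabilityMeasure ν ∧ uniformMarginals ν ∧
    ∀ x, C x = (ν {u | ∀ i, u i ≤ x i}).toReal

/-- `C` is a copula of the random vector `X`. -/
def HasCopula {n : ℕ} (μ : Measure Ω) (X : Fin n → Ω → ℝ) (C : (Fin n → ℝ) → ℝ) : Prop :=
  IsCopula C ∧ ∀ x : Fin n → ℝ, jointCDF μ X x = C (fun i => distFun μ (X i) (x i))

/-- Positively dependent through the stochastic ordering: for each `i`,
`E[f(X_{-i}) | X_i = x]` is increasing in `x` for every componentwise increasing `f`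
(not depending on coordinate `i`). -/
def PDS {n : ℕ} (μ : Measure Ω) (X : Fin n → Ω → ℝ) : Prop :=
  ∀ i : Fin n, ∀ f : (Fin n → ℝ) → ℝ, Monotone f →
    (∀ a b : Fin n → ℝ, (∀ j, j ≠ i → a j = b j) → f a = f b) →
    ∃ g : ℝ → ℝ, Monotone g ∧
      (μ[(fun ω => f (fun j => X j ω)) | MeasurableSpace.comap (X i) (borel ℝ)]
        =ᵐ[μ] fun ω => g (X i ω))

/-- `C` is a PDS copula. -/
def IsPDSCopula {n : ℕ} (C : (Fin n → ℝ) → ℝ) : Prop :=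
  ∃ ν : Measure (Fin n → ℝ), IsProbabilityMeasure ν ∧ uniformMarginals ν ∧
    (∀ x, C x = (ν {u | ∀ i, u i ≤ x i}).toReal) ∧ PDS ν (fun i u => u i)

/-- Positive orthant dependence. -/
def POD {n : ℕ} (μ : Measure Ω) (X : Fin n → Ω → ℝ) : Prop :=
  ∀ x : Fin n → ℝ,
    (∏ i, (μ {ω | X i ω ≤ x i}).toReal) ≤ (μ {ω | ∀ i, X i ω ≤ x i}).toReal ∧
    (∏ i, (μ {ω | x i < X i ω}).toReal) ≤ (μ {ω | ∀ i, x i < X i ω}).toReal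

/-- A comonotone random vector. -/
def Comonotone {m : ℕ} (Z : Fin m → Ω → ℝ) : Prop :=
  ∀ i j ω ω', 0 ≤ (Z i ω - Z i ω') * (Z j ω - Z j ω')

/-!
Let `ℓ` be a supporting line of `f` at the crossing point `t₀`. Its slope is nonnegative because
`f` is increasing, so `E ℓ(X) ≤ E ℓ(Y)` by the ordering of the means. The remainder `φ = f - ℓ`
is convex, nonnegative and vanishes at `t₀`, so for `u > 0` the superlevel set `{φ > u}` misses
`t₀` and splits into a lower set of `(-∞, t₀)` and an upper set of `(t₀, ∞)`. Single crossing
says exactly that `X` charges each such set less than `Y` does; hence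
`P(φ(X) > u) ≤ P(φ(Y) > u)` for all `u > 0`, and the layer-cake formula gives
`E φ(X) ≤ E φ(Y)`.
-/

open Filter Topology

namespace ConvexOn

variable {f : ℝ → ℝ}

theorem add_rightDeriv_mul_sub_le (hf : ConvexOn ℝ univ f) (t₀ x : ℝ) :
    f t₀ + derivWithin f (Ioi t₀) t₀ * (x - t₀) ≤ f x := by
  have ht₀ : t₀ ∈ interior univ := by simp
  rcases lt_trichotomy x t₀ with hx | rfl | hx
  · have h := (hf.slope_le_leftDeriv_of_mem_interior (mem_univ x) ht₀ hx).trans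
      (hf.leftDeriv_le_rightDeriv_of_mem_interior ht₀)
    rw [slope_def_field, div_le_iff₀ (sub_pos.2 hx)] at h
    nlinarith
  · simp
  · have h := hf.rightDeriv_le_slope_of_mem_interior ht₀ (mem_univ x) hx
    rw [slope_def_field, le_div_iff₀ (sub_pos.2 hx)] at h
    linarith

theorem rightDeriv_nonneg_of_monotone (hf : ConvexOn ℝ univ f) (hmono : Monotone f) (t₀ : ℝ) :
    0 ≤ derivWithin f (Ioi t₀) t₀ := by
  have ht₀ : t₀ ∈ interior univ := by simp
  calc 0 ≤ slope f (t₀ - 1) t₀ := by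
        rw [slope_def_field]
        exact div_nonneg (sub_nonneg.2 (hmono (by linarith))) (by linarith)
    _ ≤ _ := (hf.slope_le_leftDeriv_of_mem_interior (mem_univ _) ht₀ (by linarith)).trans
      (hf.leftDeriv_le_rightDeriv_of_mem_interior ht₀)

theorem isLowerSet_setOf_lt_inter_Iio (hf : ConvexOn ℝ univ f) {t₀ u : ℝ} (h : f t₀ ≤ u) :
    IsLowerSet ({x | u < f x} ∩ Iio t₀) := by
  rintro y x hxy ⟨hy, hyt⟩
  refine ⟨?_, hxy.trans_lt hyt⟩
  by_contra hx
  exact (hy.trans_le ((hf.convex_le u).ordConnected.out ⟨mem_univ x, not_lt.1 hx⟩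
    ⟨mem_univ t₀, h⟩ ⟨hxy, hyt.le⟩).2).false

theorem isUpperSet_setOf_lt_inter_Ioi (hf : ConvexOn ℝ univ f) {t₀ u : ℝ} (h : f t₀ ≤ u) :
    IsUpperSet ({x | u < f x} ∩ Ioi t₀) := by
  rintro x y hxy ⟨hx, hxt⟩
  refine ⟨?_, hxt.trans_le hxy⟩
  by_contra hy
  exact (hx.trans_le ((hf.convex_le u).ordConnected.out ⟨mem_univ t₀, h⟩
    ⟨mem_univ y, not_lt.1 hy⟩ ⟨hxt.le, hxy⟩).2).false

end ConvexOn

theorem IsLowerSet.eq_Iic_or_eq_Iio {α : Type*} [ConditionallyCompleteLinearOrder α]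
    {s : Set α} (hs : IsLowerSet s) (hne : s.Nonempty) (hbdd : BddAbove s) :
    s = Iic (sSup s) ∨ s = Iio (sSup s) := by
  by_cases hmem : sSup s ∈ s
  · exact .inl <| Subset.antisymm (fun x hx => le_csSup hbdd hx) fun x hx => hs hx hmem
  · refine .inr <| Subset.antisymm (fun x hx => (le_csSup hbdd hx).lt_of_ne ?_) fun x hx => ?_
    · rintro rfl; exact hmem hx
    · obtain ⟨y, hy, hxy⟩ := exists_lt_of_lt_csSup hne hx
      exact hs hxy.le hy

theorem IsUpperSet.eq_Ici_or_eq_Ioi {α : Type*} [ConditionallyCompleteLinearOrder α]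
    {s : Set α} (hs : IsUpperSet s) (hne : s.Nonempty) (hbdd : BddBelow s) :
    s = Ici (sInf s) ∨ s = Ioi (sInf s) :=
  IsLowerSet.eq_Iic_or_eq_Iio (α := αᵒᵈ) hs.toDual hne hbdd

section

variable {μ : Measure Ω} {ν : Measure Ω'} {X : Ω → ℝ} {Y : Ω' → ℝ}

theorem tendsto_measure_preimage_Iic_of_tendsto {a : ℝ} {u : ℕ → ℝ} (hu_mono : Monotone u)
    (hu_lt : ∀ n, u n < a) (hu_lim : Tendsto u atTop (𝓝 a)) :
    Tendsto (fun n => μ (X ⁻¹' Iic (u n))) atTop (𝓝 (μ (X ⁻¹' Iio a))) := by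
  rw [← iUnion_Iic_eq_Iio_of_lt_of_tendsto hu_lt hu_lim, preimage_iUnion]
  exact tendsto_measure_iUnion_atTop fun m n hmn => preimage_mono (Iic_subset_Iic.2 (hu_mono hmn))

theorem measure_preimage_Iio_le_of_eventually_le {a : ℝ}
    (h : ∀ᶠ t in 𝓝[<] a, μ (X ⁻¹' Iic t) ≤ ν (Y ⁻¹' Iic t)) :
    μ (X ⁻¹' Iio a) ≤ ν (Y ⁻¹' Iio a) := by
  obtain ⟨u, hu_mono, hu_lt, hu_lim⟩ := exists_seq_strictMono_tendsto a
  exact le_of_tendsto_of_tendsto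
    (tendsto_measure_preimage_Iic_of_tendsto hu_mono.monotone hu_lt hu_lim)
    (tendsto_measure_preimage_Iic_of_tendsto hu_mono.monotone hu_lt hu_lim)
    ((tendsto_nhdsWithin_iff.2 ⟨hu_lim, .of_forall hu_lt⟩).eventually h)

theorem measure_compl_le_measure_compl [IsProbabilityMeasure μ] [IsProbabilityMeasure ν]
    {s : Set Ω} {t : Set Ω'} (hs : MeasurableSet s) (ht : MeasurableSet t) (h : ν t ≤ μ s) :
    μ sᶜ ≤ ν tᶜ := by
  rw [prob_compl_eq_one_sub hs, prob_compl_eq_one_sub ht]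
  exact tsub_le_tsub_left h 1

theorem distFun_le_distFun_iff [IsFiniteMeasure μ] [IsFiniteMeasure ν] {t : ℝ} :
    distFun μ X t ≤ distFun ν Y t ↔ μ (X ⁻¹' Iic t) ≤ ν (Y ⁻¹' Iic t) :=
  ENNReal.toReal_le_toReal (measure_ne_top _ _) (measure_ne_top _ _)

theorem integral_le_integral_of_measure_lt_le {F : Ω → ℝ} {G : Ω' → ℝ}
    (hF : 0 ≤ᵐ[μ] F) (hFm : AEMeasurable F μ) (hG : 0 ≤ᵐ[ν] G) (hGi : Integrable G ν)
    (h : ∀ u > 0, μ {ω | u < F ω} ≤ ν {ω | u < G ω}) :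
    ∫ ω, F ω ∂μ ≤ ∫ ω, G ω ∂ν := by
  rw [integral_eq_lintegral_of_nonneg_ae hF hFm.aestronglyMeasurable,
    integral_eq_lintegral_of_nonneg_ae hG hGi.aestronglyMeasurable]
  refine ENNReal.toReal_mono hGi.lintegral_lt_top.ne ?_
  rw [lintegral_eq_lintegral_meas_lt μ hF hFm,
    lintegral_eq_lintegral_meas_lt ν hG hGi.aemeasurable]
  exact setLIntegral_mono' measurableSet_Ioi h

theorem integral_const_add_mul_sub [IsProbabilityMeasure μ] (hX : Integrable X μ) (a c t : ℝ) :
    ∫ ω, (a + c * (X ω - t)) ∂μ = a + c * (∫ ω, X ω ∂μ - t) := by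
  have hXt : Integrable (fun ω => X ω - t) μ := hX.sub (integrable_const t)
  rw [integral_add (integrable_const a) (hXt.const_mul c), integral_const_mul,
    integral_sub hX (integrable_const t)]
  simp

section SingleCrossing

variable {t₀ : ℝ}

theorem measure_preimage_le_of_isLowerSet
    (hbelow : ∀ t < t₀, μ (X ⁻¹' Iic t) ≤ ν (Y ⁻¹' Iic t))
    {s : Set ℝ} (hs : IsLowerSet s) (hst : s ⊆ Iio t₀) : μ (X ⁻¹' s) ≤ ν (Y ⁻¹' s) := by
  rcases s.eq_empty_or_nonempty with rfl | hne
  · simp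
  have hsup : sSup s ≤ t₀ := csSup_le hne fun x hx => (hst hx).le
  rcases hs.eq_Iic_or_eq_Iio hne ⟨t₀, fun x hx => (hst hx).le⟩ with h | h <;> rw [h]
  · exact hbelow _ (hst (h.ge (le_refl (sSup s))))
  · exact measure_preimage_Iio_le_of_eventually_le <|
      eventually_nhdsWithin_of_forall fun t ht => hbelow t (lt_of_lt_of_le ht hsup)

theorem measure_preimage_le_of_isUpperSet [IsProbabilityMeasure μ] [IsProbabilityMeasure ν]
    (hX : Measurable X) (hY : Measurable Y)
    (habove : ∀ t ≥ t₀, ν (Y ⁻¹' Iic t) ≤ μ (X ⁻¹' Iic t))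
    {s : Set ℝ} (hs : IsUpperSet s) (hst : s ⊆ Ioi t₀) : μ (X ⁻¹' s) ≤ ν (Y ⁻¹' s) := by
  rcases s.eq_empty_or_nonempty with rfl | hne
  · simp
  rcases hs.eq_Ici_or_eq_Ioi hne ⟨t₀, fun x hx => (hst hx).le⟩ with h | h <;> rw [h]
  · have hinf : t₀ < sInf s := hst (h.ge (le_refl (sInf s)))
    rw [← compl_Iio, preimage_compl, preimage_compl]
    refine measure_compl_le_measure_compl (hX measurableSet_Iio) (hY measurableSet_Iio) ?_
    refine measure_preimage_Iio_le_of_eventually_le ?_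
    filter_upwards [Ioo_mem_nhdsLT hinf] with t ht using habove t ht.1.le
  · have hinf : t₀ ≤ sInf s := le_csInf hne fun x hx => (hst hx).le
    rw [← compl_Iic, preimage_compl, preimage_compl]
    exact measure_compl_le_measure_compl (hX measurableSet_Iic) (hY measurableSet_Iic)
      (habove _ hinf)

theorem measure_preimage_le_of_single_crossing [IsProbabilityMeasure μ] [IsProbabilityMeasure ν]
    (hX : Measurable X) (hY : Measurable Y)
    (hbelow : ∀ t < t₀, μ (X ⁻¹' Iic t) ≤ ν (Y ⁻¹' Iic t))
    (habove : ∀ t ≥ t₀, ν (Y ⁻¹' Iic t) ≤ μ (X ⁻¹' Iic t))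
    {s : Set ℝ} (hs₀ : t₀ ∉ s) (hs_lower : IsLowerSet (s ∩ Iio t₀))
    (hs_upper : IsUpperSet (s ∩ Ioi t₀)) : μ (X ⁻¹' s) ≤ ν (Y ⁻¹' s) := by
  have hsplit : s = (s ∩ Iio t₀) ∪ (s ∩ Ioi t₀) := by
    rw [← inter_union_distrib_left, Iio_union_Ioi, eq_comm, inter_eq_left,
      subset_compl_singleton_iff]
    exact hs₀
  have hdisj : Disjoint (s ∩ Iio t₀) (s ∩ Ioi t₀) :=
    disjoint_left.2 fun _ hlt hgt => lt_asymm (mem_Iio.1 hlt.2) (mem_Ioi.1 hgt.2)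
  rw [hsplit, preimage_union, preimage_union]
  calc μ (X ⁻¹' (s ∩ Iio t₀) ∪ X ⁻¹' (s ∩ Ioi t₀))
      ≤ μ (X ⁻¹' (s ∩ Iio t₀)) + μ (X ⁻¹' (s ∩ Ioi t₀)) := measure_union_le _ _
    _ ≤ ν (Y ⁻¹' (s ∩ Iio t₀)) + ν (Y ⁻¹' (s ∩ Ioi t₀)) := add_le_add
        (measure_preimage_le_of_isLowerSet hbelow hs_lower inter_subset_right)
        (measure_preimage_le_of_isUpperSet hX hY habove hs_upper inter_subset_right)
    _ = ν (Y ⁻¹' (s ∩ Iio t₀) ∪ Y ⁻¹' (s ∩ Ioi t₀)) :=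
        (measure_union (hdisj.preimage Y) (hY hs_upper.ordConnected.measurableSet)).symm

end SingleCrossing

end

/-- single crossing of the distribution functions together with ordered
means implies the increasing convex order. -/
theorem single_crossing_implies_le_icx
    (μ : Measure Ω) (ν : Measure Ω') [IsProbabilityMeasure μ] [IsProbabilityMeasure ν]
    (X : Ω → ℝ) (Y : Ω' → ℝ) (hXm : Measurable X) (hYm : Measurable Y)
    (hX : Integrable X μ) (hY : Integrable Y ν)
    (t₀ : ℝ)
    (hbelow : ∀ t < t₀, distFun μ X t ≤ distFun ν Y t)
    (habove : ∀ t ≥ t₀, distFun ν Y t ≤ distFun μ X t)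
    (hmean : ∫ ω, X ω ∂μ ≤ ∫ ω, Y ω ∂ν) :
    le_icx μ X ν Y := by
  intro f hf_mono hf_conv hfX hfY
  set c := derivWithin f (Ioi t₀) t₀
  have hc : 0 ≤ c := hf_conv.rightDeriv_nonneg_of_monotone hf_mono t₀
  set ℓ : ℝ → ℝ := fun x => f t₀ + c * (x - t₀)
  set φ : ℝ → ℝ := fun x => f x - ℓ x
  have hφ : ConvexOn ℝ univ φ := hf_conv.sub <| (concaveOn_const _ convex_univ).add <|
    ((concaveOn_id convex_univ).sub (convexOn_const t₀ convex_univ)).smul hc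
  have hφ_nonneg (x : ℝ) : 0 ≤ φ x := sub_nonneg.2 (hf_conv.add_rightDeriv_mul_sub_le t₀ x)
  have hℓX : Integrable (fun ω => ℓ (X ω)) μ :=
    (integrable_const _).add ((hX.sub (integrable_const _)).const_mul c)
  have hℓY : Integrable (fun ω => ℓ (Y ω)) ν :=
    (integrable_const _).add ((hY.sub (integrable_const _)).const_mul c)
  have hlevel (u : ℝ) (hu : u > 0) : μ {ω | u < φ (X ω)} ≤ ν {ω | u < φ (Y ω)} := by
    have hφ₀ : φ t₀ ≤ u := by simpa [φ, ℓ] using hu.le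
    exact measure_preimage_le_of_single_crossing (s := {x | u < φ x}) hXm hYm
      (fun t ht => distFun_le_distFun_iff.1 (hbelow t ht))
      (fun t ht => distFun_le_distFun_iff.1 (habove t ht)) (not_lt.2 hφ₀)
      (hφ.isLowerSet_setOf_lt_inter_Iio hφ₀) (hφ.isUpperSet_setOf_lt_inter_Ioi hφ₀)
  have hφ_int : ∫ ω, φ (X ω) ∂μ ≤ ∫ ω, φ (Y ω) ∂ν :=
    integral_le_integral_of_measure_lt_le (.of_forall fun ω => hφ_nonneg (X ω))
      (hfX.sub hℓX).aemeasurable (.of_forall fun ω => hφ_nonneg (Y ω)) (hfY.sub hℓY) hlevel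
  have hℓ_int : ∫ ω, ℓ (X ω) ∂μ ≤ ∫ ω, ℓ (Y ω) ∂ν := by
    simp only [ℓ, integral_const_add_mul_sub hX, integral_const_add_mul_sub hY]
    gcongr
  have hsplitX : ∫ ω, φ (X ω) ∂μ = ∫ ω, f (X ω) ∂μ - ∫ ω, ℓ (X ω) ∂μ := integral_sub hfX hℓX
  have hsplitY : ∫ ω, φ (Y ω) ∂ν = ∫ ω, f (Y ω) ∂ν - ∫ ω, ℓ (Y ω) ∂ν := integral_sub hfY hℓY
  linarith
end
end

section
/- If X ≤_icx Y for integrable random variables X, Y, then there exists a random variable Z (possibly on an enlarged probability space) with X ≤_st Z and Z ≤_cx Y. -/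
/-!
If `𝔼 X = 𝔼 Y`, the increasing convex order already gives the convex order, so `Z = X` works:
a convex `f` that is not increasing is decreasing on some `(-∞, a]`, and
`𝔼 f(max(X, t)) → 𝔼 f(X)` as `t → -∞`. Otherwise `𝔼 X < 𝔼 Y` and `Z = max(X, t)` with
`𝔼 max(X, t) = 𝔼 Y`. In both cases the comparison rests on the same inequality: if `s` is a
subgradient of a convex `f` at `t`, then `x ↦ f(max(x, t)) - s max(x, t)` is increasing and
convex, whence `𝔼 f(max(X, t)) ≤ 𝔼 f(Y) + s (𝔼 max(X, t) - 𝔼 Y)`.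
-/

open MeasureTheory ProbabilityTheory Set

noncomputable section

variable {Ω Ω' : Type*} [MeasurableSpace Ω] [MeasurableSpace Ω']

open Filter Topology

lemma ConvexOn.add_rightDeriv_mul_sub_le_s5 {f : ℝ → ℝ} (hf : ConvexOn ℝ univ f) (t x : ℝ) :
    f t + derivWithin f (Ioi t) t * (x - t) ≤ f x := by
  have ht : t ∈ interior (univ : Set ℝ) := by simp
  rcases lt_trichotomy x t with hxt | rfl | htx
  · have hslope := (hf.slope_le_leftDeriv_of_mem_interior (mem_univ x) ht hxt).trans
      (hf.leftDeriv_le_rightDeriv_of_mem_interior ht)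
    rw [slope_def_field, div_le_iff₀ (sub_pos.2 hxt)] at hslope
    linarith
  · simp
  · have hslope := hf.rightDeriv_le_slope_of_mem_interior ht (mem_univ x) htx
    rw [slope_def_field, le_div_iff₀ (sub_pos.2 htx)] at hslope
    linarith

lemma ConvexOn.continuous {f : ℝ → ℝ} (hf : ConvexOn ℝ univ f) : Continuous f :=
  continuousOn_univ.1 (hf.continuousOn isOpen_univ)

lemma ConvexOn.monotoneOn_Ici_of_isMinOn {g : ℝ → ℝ} {t : ℝ} (hg : ConvexOn ℝ (Ici t) g)
    (hmin : IsMinOn g (Ici t) t) : MonotoneOn g (Ici t) := by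
  intro x hx y hy hxy
  have hseg : x ∈ segment ℝ t y := by rw [segment_eq_Icc (hx.trans hxy)]; exact ⟨hx, hxy⟩
  exact (hg.le_on_segment self_mem_Ici hy hseg).trans (max_le (hmin hy) le_rfl)

lemma ConvexOn.comp_max_const {g : ℝ → ℝ} {t : ℝ} (hg : ConvexOn ℝ (Ici t) g)
    (hmono : MonotoneOn g (Ici t)) : ConvexOn ℝ univ fun x => g (max x t) := by
  have himage : (fun x => max x t) '' univ = Ici t := by
    ext y
    simpa using ⟨fun ⟨x, hx⟩ => hx ▸ le_max_right x t, fun hy => ⟨y, max_eq_left hy⟩⟩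
  rw [← himage] at hg hmono
  exact hg.comp ((convexOn_id convex_univ).sup (convexOn_const t convex_univ)) hmono

lemma ConvexOn.monotone_or_exists_antitoneOn_Iic {f : ℝ → ℝ} (hf : ConvexOn ℝ univ f) :
    Monotone f ∨ ∃ a, AntitoneOn f (Iic a) := by
  refine or_iff_not_imp_left.2 fun hmono => ?_
  obtain ⟨a, b, hab, hba⟩ : ∃ a b, a ≤ b ∧ f b < f a := by
    simpa [Monotone] using hmono
  refine ⟨a, fun y _ z hz hyz => ?_⟩
  -- `a` lies between `z` and `b`, and `z` between `y` and `b`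
  have hza : f a ≤ f z := by
    have := hf.le_on_segment (mem_univ z) (mem_univ b)
      (by rw [segment_eq_Icc (hz.trans hab)]; exact ⟨hz, hab⟩)
    exact (le_max_iff.1 this).resolve_right hba.not_ge
  have := hf.le_on_segment (mem_univ y) (mem_univ b)
    (by rw [segment_eq_Icc (hyz.trans (hz.trans hab))]; exact ⟨hyz, hz.trans hab⟩)
  exact (le_max_iff.1 this).resolve_right (by linarith)

section MaxWithConstant

variable {μ : Measure Ω} {X : Ω → ℝ}

lemma abs_comp_max_le_of_monotoneOn_or_antitoneOn {f : ℝ → ℝ} {c t : ℝ}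
    (hf : MonotoneOn f (Iic c) ∨ AntitoneOn f (Iic c)) (htc : t ≤ c) (x : ℝ) :
    |f (max x t)| ≤ |f x| + |f c| := by
  rcases le_total t x with htx | hxt
  · rw [max_eq_left htx]
    linarith [abs_nonneg (f c)]
  · rw [max_eq_right hxt]
    have hx : x ∈ Iic c := hxt.trans htc
    refine (?_ : |f t| ≤ max |f x| |f c|).trans (max_le_add_of_nonneg (abs_nonneg _) (abs_nonneg _))
    rcases hf with hf | hf
    · exact abs_le_max_abs_abs (hf hx htc hxt) (hf htc self_mem_Iic htc)
    · exact max_comm |f x| _ ▸ abs_le_max_abs_abs (hf htc self_mem_Iic htc) (hf hx htc hxt)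

lemma MeasureTheory.Integrable.comp_max_const [IsFiniteMeasure μ] {f : ℝ → ℝ}
    (hf : Continuous f) (hX : AEMeasurable X μ) (hfX : Integrable (fun ω => f (X ω)) μ) (t : ℝ) :
    Integrable (fun ω => f (max (X ω) t)) μ := by
  refine (hfX.abs.add (integrable_const |f t|)).mono'
    (hf.measurable.comp_aemeasurable (hX.max aemeasurable_const)).aestronglyMeasurable
    (ae_of_all _ fun ω => ?_)
  rcases le_total t (X ω) with ht | ht
  · simp [max_eq_left ht]
  · simp [max_eq_right ht]

lemma tendsto_integral_comp_max_atBot [IsFiniteMeasure μ] {f : ℝ → ℝ} {c : ℝ}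
    (hf : Continuous f) (hfc : MonotoneOn f (Iic c) ∨ AntitoneOn f (Iic c))
    (hX : AEMeasurable X μ) (hfX : Integrable (fun ω => f (X ω)) μ) :
    Tendsto (fun t => ∫ ω, f (max (X ω) t) ∂μ) atBot (𝓝 (∫ ω, f (X ω) ∂μ)) := by
  refine tendsto_integral_filter_of_dominated_convergence (fun ω => |f (X ω)| + |f c|)
    (Eventually.of_forall fun t => (hfX.comp_max_const hf hX t).aestronglyMeasurable)
    ?_ (hfX.abs.add (integrable_const _)) (ae_of_all _ fun ω => ?_)
  · filter_upwards [eventually_le_atBot c] with t htc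
    exact ae_of_all _ fun ω => abs_comp_max_le_of_monotoneOn_or_antitoneOn hfc htc (X ω)
  · refine tendsto_const_nhds.congr' ?_
    filter_upwards [eventually_le_atBot (X ω)] with t ht
    rw [max_eq_left ht]

variable [IsProbabilityMeasure μ]

lemma lipschitzWith_integral_max_const (hX : Integrable X μ) :
    LipschitzWith 1 fun t => ∫ ω, max (X ω) t ∂μ := by
  refine LipschitzWith.of_dist_le_mul fun t t' => ?_
  have hmax : ∀ u, Integrable (fun ω => max (X ω) u) μ := fun u => hX.sup (integrable_const u)
  rw [Real.dist_eq, Real.dist_eq, NNReal.coe_one, one_mul, ← integral_sub (hmax t) (hmax t')]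
  have hbound : ∀ ω, ‖max (X ω) t - max (X ω) t'‖ ≤ |t - t'| := fun ω => by
    rw [Real.norm_eq_abs, max_comm (X ω), max_comm (X ω)]
    exact abs_max_sub_max_le_abs t t' (X ω)
  simpa using norm_integral_le_of_norm_le_const (ae_of_all μ hbound)

lemma exists_integral_max_const_eq (hX : Integrable X μ) {c : ℝ} (hc : ∫ ω, X ω ∂μ < c) :
    ∃ t, ∫ ω, max (X ω) t ∂μ = c := by
  have hlim := tendsto_integral_comp_max_atBot continuous_id (c := 0)
    (Or.inl monotoneOn_id) hX.aemeasurable hX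
  obtain ⟨t, ht⟩ := (hlim.eventually (gt_mem_nhds hc)).exists
  have hge : ∀ u, u ≤ ∫ ω, max (X ω) u ∂μ := fun u => by
    simpa using integral_mono (integrable_const u) (hX.sup (integrable_const u))
      fun ω => le_max_right (X ω) u
  have htc : t ≤ c := ((hge t).trans_lt ht).le
  obtain ⟨u, -, hu⟩ := intermediate_value_Icc htc
    (lipschitzWith_integral_max_const hX).continuous.continuousOn ⟨ht.le, hge c⟩
  exact ⟨u, hu⟩

end MaxWithConstant

section StochasticOrders

variable {μ : Measure Ω} {ν : Measure Ω'} {X : Ω → ℝ} {Y : Ω' → ℝ}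

lemma integral_le_integral_of_le_icx (h : le_icx μ X ν Y) (hX : Integrable X μ)
    (hY : Integrable Y ν) : ∫ ω, X ω ∂μ ≤ ∫ ω, Y ω ∂ν :=
  h id monotone_id (convexOn_id convex_univ) hX hY

lemma le_st_map_of_le {g : ℝ → ℝ} (hX : AEMeasurable X μ) (hg : ∀ x, x ≤ g x) :
    le_st μ X (μ.map X) g := by
  intro f hf hfX hfg
  rw [integral_map hX hfg.aestronglyMeasurable]
  exact integral_mono hfX ((integrable_map_measure hfg.aestronglyMeasurable hX).mp hfg)
    fun ω => hf (hg (X ω))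

lemma le_cx_map {g : ℝ → ℝ} (hX : AEMeasurable X μ) (h : le_cx μ (fun ω => g (X ω)) ν Y) :
    le_cx (μ.map X) g ν Y := by
  intro f hf hfg hfY
  rw [integral_map hX hfg.aestronglyMeasurable]
  exact h f hf ((integrable_map_measure hfg.aestronglyMeasurable hX).mp hfg) hfY

variable [IsFiniteMeasure μ] [IsFiniteMeasure ν]

/-- With `m x = f (max x t) - s * max x t`, which is increasing and convex, `f = m + s • id` on
`[t, ∞)` and `m + s • id ≤ f` everywhere, so it suffices to compare `𝔼 m(X) ≤ 𝔼 m(Y)`. -/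
lemma integral_comp_max_le_of_le_icx (h : le_icx μ X ν Y) (hX : Integrable X μ)
    (hY : Integrable Y ν) {f : ℝ → ℝ} (hf : ConvexOn ℝ univ f) {t s : ℝ}
    (hs : ∀ x, f t + s * (x - t) ≤ f x) (hfX : Integrable (fun ω => f (max (X ω) t)) μ)
    (hfY : Integrable (fun ω => f (Y ω)) ν) :
    ∫ ω, f (max (X ω) t) ∂μ ≤
      ∫ ω, f (Y ω) ∂ν + s * (∫ ω, max (X ω) t ∂μ - ∫ ω, Y ω ∂ν) := by
  set g : ℝ → ℝ := fun y => f y - s * y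
  have hg : ConvexOn ℝ (Ici t) g :=
    (hf.subset (subset_univ _) (convex_Ici t)).sub ((LinearMap.mul ℝ ℝ s).concaveOn (convex_Ici t))
  have hg_mono : MonotoneOn g (Ici t) :=
    hg.monotoneOn_Ici_of_isMinOn <| isMinOn_iff.2 fun x _ => by simp only [g]; linarith [hs x]
  have hmaxX : Integrable (fun ω => max (X ω) t) μ := hX.sup (integrable_const t)
  have hgX : Integrable (fun ω => g (max (X ω) t)) μ := hfX.sub (hmaxX.const_mul s)
  have hgY : Integrable (fun ω => g (max (Y ω) t)) ν :=
    (hfY.comp_max_const hf.continuous hY.aemeasurable t).sub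
      ((hY.sup (integrable_const t)).const_mul s)
  have hcompare : ∫ ω, g (max (X ω) t) ∂μ ≤ ∫ ω, g (max (Y ω) t) ∂ν :=
    h _ (fun x y hxy => hg_mono (le_max_right x t) (le_max_right y t) (max_le_max_right t hxy))
      (hg.comp_max_const hg_mono) hgX hgY
  have hgY_le : ∀ y, g (max y t) + s * y ≤ f y := fun y => by
    rcases le_total t y with hty | hyt
    · simp [g, max_eq_left hty]
    · simp only [g, max_eq_right hyt]; linarith [hs y]
  have hY_le : ∫ ω, g (max (Y ω) t) ∂ν + s * ∫ ω, Y ω ∂ν ≤ ∫ ω, f (Y ω) ∂ν := by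
    rw [← integral_const_mul, ← integral_add hgY (hY.const_mul s)]
    exact integral_mono (hgY.add (hY.const_mul s)) hfY fun ω => hgY_le (Y ω)
  have hX_eq : ∫ ω, f (max (X ω) t) ∂μ = ∫ ω, g (max (X ω) t) ∂μ + s * ∫ ω, max (X ω) t ∂μ := by
    rw [← integral_const_mul, ← integral_add hgX (hmaxX.const_mul s)]
    simp [g]
  linarith

lemma le_cx_of_le_icx_of_integral_eq (h : le_icx μ X ν Y) (hX : Integrable X μ)
    (hY : Integrable Y ν) (heq : ∫ ω, X ω ∂μ = ∫ ω, Y ω ∂ν) : le_cx μ X ν Y := by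
  intro f hf hfX hfY
  obtain hmono | ⟨a, ha⟩ := hf.monotone_or_exists_antitoneOn_Iic
  · exact h f hmono hf hfX hfY
  refine le_of_tendsto (tendsto_integral_comp_max_atBot hf.continuous (Or.inr ha)
    hX.aemeasurable hfX) ?_
  filter_upwards [eventually_lt_atBot a] with t hta
  set s := derivWithin f (Ioi t) t
  have hs := hf.add_rightDeriv_mul_sub_le_s5 t
  -- for `t < a` the correction term `s * (𝔼 max(X, t) - 𝔼 Y)` is nonpositive
  have hs_nonpos : s ≤ 0 := by
    have := hs a
    nlinarith [ha hta.le self_mem_Iic hta.le]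
  have hmean : ∫ ω, Y ω ∂ν ≤ ∫ ω, max (X ω) t ∂μ :=
    heq ▸ integral_mono hX (hX.sup (integrable_const t)) fun ω => le_max_left (X ω) t
  exact (integral_comp_max_le_of_le_icx h hX hY hf hs
    (hfX.comp_max_const hf.continuous hX.aemeasurable t) hfY).trans
    (add_le_of_nonpos_right (mul_nonpos_of_nonpos_of_nonneg hs_nonpos (sub_nonneg.2 hmean)))

lemma le_cx_max_of_le_icx_of_integral_eq (h : le_icx μ X ν Y) (hX : Integrable X μ)
    (hY : Integrable Y ν) {t : ℝ} (ht : ∫ ω, max (X ω) t ∂μ = ∫ ω, Y ω ∂ν) :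
    le_cx μ (fun ω => max (X ω) t) ν Y := by
  intro f hf hfX hfY
  simpa [ht] using integral_comp_max_le_of_le_icx h hX hY hf
    (hf.add_rightDeriv_mul_sub_le_s5 t) hfX hfY

end StochasticOrders

theorem le_icx_iff_st_cx_decomposition_general
    (μ : Measure Ω) (ν : Measure Ω') [IsProbabilityMeasure μ] [IsProbabilityMeasure ν]
    (X : Ω → ℝ) (Y : Ω' → ℝ)
    (hX : Integrable X μ) (hY : Integrable Y ν)
    (h : le_icx μ X ν Y) :
    ∃ (Ω'' : Type) (_ : MeasurableSpace Ω'') (P : Measure Ω'') (Z : Ω'' → ℝ),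
      IsProbabilityMeasure P ∧ Measurable Z ∧ Integrable Z P ∧
      le_st μ X P Z ∧ le_cx P Z ν Y := by
  obtain ⟨g, hg_meas, hg_ge, hgX, hgY⟩ : ∃ g : ℝ → ℝ, Measurable g ∧ (∀ x, x ≤ g x) ∧
      Integrable (fun ω => g (X ω)) μ ∧ le_cx μ (fun ω => g (X ω)) ν Y := by
    rcases (integral_le_integral_of_le_icx h hX hY).eq_or_lt with heq | hlt
    · exact ⟨id, measurable_id, le_refl, hX, le_cx_of_le_icx_of_integral_eq h hX hY heq⟩
    · obtain ⟨t, ht⟩ := exists_integral_max_const_eq hX hlt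
      exact ⟨fun x => max x t, measurable_id.max measurable_const, (le_max_left · t),
        hX.sup (integrable_const t), le_cx_max_of_le_icx_of_integral_eq h hX hY ht⟩
  have hXm := hX.aemeasurable
  exact ⟨ℝ, inferInstance, μ.map X, g, Measure.isProbabilityMeasure_map hXm, hg_meas,
    (integrable_map_measure hg_meas.aestronglyMeasurable hXm).2 hgX, le_st_map_of_le hXm hg_ge,
    le_cx_map hXm hgY⟩

/-- `X ≤_icx Y` implies existence of `Z` with `X ≤_st Z ≤_cx Y`. -/
theorem le_icx_iff_st_cx_decomposition
    (μ : Measure Ω) (ν : Measure Ω') [IsProbabilityMeasure μ] [IsProbabilityMeasure ν]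
    (X : Ω → ℝ) (Y : Ω' → ℝ) (hXm : Measurable X) (hYm : Measurable Y)
    (hX : Integrable X μ) (hY : Integrable Y ν)
    (h : le_icx μ X ν Y) :
    ∃ (Ω'' : Type) (_ : MeasurableSpace Ω'') (P : Measure Ω'') (Z : Ω'' → ℝ),
      IsProbabilityMeasure P ∧ Measurable Z ∧ Integrable Z P ∧
      le_st μ X P Z ∧ le_cx P Z ν Y :=
  le_icx_iff_st_cx_decomposition_general μ ν X Y hX hY h
end
end

section
/- Let X = (X₁,…,Xₙ) and Y = (Y₁,…,Yₙ) be random vectors with a common copula C. If Xᵢ ≤_st Yᵢ for each i = 1,…,n, then X₁ + ⋯ + Xₙ ≤_st Y₁ + ⋯ + Yₙ. -/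
open MeasureTheory ProbabilityTheory Set

noncomputable section

variable {Ω Ω' : Type*} [MeasurableSpace Ω] [MeasurableSpace Ω']

/-!
Let `P` be a probability measure on `ℝⁿ` with uniform marginals and distribution function `C`,
and write `F⁻¹` for the generalized inverse of a distribution function `F`. Since
`F⁻¹ u ≤ x ↔ u ≤ F x` for `u ∈ (0, 1)`, a vector `X` with copula `C` has the law of
`(F_{X_i}⁻¹ (U_i))_i` for `U ~ P`, and likewise for `Y`. Testing `≤_st` against the indicators of
`(x, ∞)` gives `F_{Y_i} ≤ F_{X_i}`, hence `F_{X_i}⁻¹ ≤ F_{Y_i}⁻¹`: both sums are realized on the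
same probability space, the first pointwise below the second.
-/

theorem distFun_eq_cdf_map (μ : Measure Ω) [IsProbabilityMeasure μ] {X : Ω → ℝ}
    (hX : Measurable X) : distFun μ X = cdf (μ.map X) := by
  have := Measure.isProbabilityMeasure_map (μ := μ) hX.aemeasurable
  ext x
  rw [distFun, cdf_eq_real, measureReal_def, Measure.map_apply hX measurableSet_Iic]
  rfl

/-- The generalized inverse `u ↦ inf {x | u ≤ F x}` of a distribution function `F`, set to `0`
off `(0, 1)`, where the infimum would be taken over an empty or unbounded set. -/
def quantile (F : ℝ → ℝ) (u : ℝ) : ℝ := if u ∈ Ioo 0 1 then sInf {x | u ≤ F x} else 0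

section Quantile

variable (P : Measure ℝ)

theorem quantile_le_iff {u : ℝ} (hu : u ∈ Ioo 0 1) (x : ℝ) :
    quantile (cdf P) u ≤ x ↔ u ≤ cdf P x := by
  have hne : {y | u ≤ cdf P y}.Nonempty :=
    ((tendsto_cdf_atTop P).eventually (eventually_ge_nhds hu.2)).exists
  have hbdd : BddBelow {y | u ≤ cdf P y} := by
    obtain ⟨x₀, hx₀⟩ := ((tendsto_cdf_atBot P).eventually (eventually_lt_nhds hu.1)).exists
    exact ⟨x₀, fun y hy => le_of_not_gt fun hlt => (hy.trans (monotone_cdf P hlt.le)).not_gt hx₀⟩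
  rw [quantile, if_pos hu]
  refine ⟨fun h => ?_, fun h => csInf_le hbdd h⟩
  suffices u ≤ cdf P (sInf {y | u ≤ cdf P y}) from this.trans (monotone_cdf P h)
  -- right continuity of `cdf P` puts the infimum itself into the set
  refine ge_of_tendsto ((cdf P).right_continuous _ |>.mono Ioi_subset_Ici_self) ?_
  filter_upwards [self_mem_nhdsWithin] with y hy
  obtain ⟨s, hs, hsy⟩ := exists_lt_of_csInf_lt hne hy
  exact hs.trans (monotone_cdf P hsy.le)

theorem measurable_quantile : Measurable (quantile (cdf P)) := by
  refine measurable_of_Iic fun x => ?_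
  have : quantile (cdf P) ⁻¹' Iic x = Ioo 0 1 ∩ Iic (cdf P x) ∪ (Ioo 0 1)ᶜ ∩ {_u | 0 ≤ x} := by
    ext u
    by_cases hu : u ∈ Ioo 0 1
    · simp [hu, quantile_le_iff P hu]
    · simp [hu, quantile]
  rw [this]
  exact (measurableSet_Ioo.inter measurableSet_Iic).union
    (measurableSet_Ioo.compl.inter (MeasurableSet.const _))

theorem quantile_le_quantile_of_cdf_le {Q : Measure ℝ}
    (h : ∀ x, cdf Q x ≤ cdf P x) {u : ℝ} (hu : u ∈ Ioo 0 1) :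
    quantile (cdf P) u ≤ quantile (cdf Q) u :=
  (quantile_le_iff P hu _).2 <| ((quantile_le_iff Q hu _).1 le_rfl).trans (h _)

end Quantile

theorem monotone_indicator_Ioi_one {α : Type*} [Preorder α] (x : α) :
    Monotone ((Ioi x).indicator (1 : α → ℝ)) := by
  intro a b hab
  by_cases ha : a ∈ Ioi x
  · rw [indicator_of_mem ha, indicator_of_mem (mem_Ioi.2 (lt_of_lt_of_le ha hab))]; rfl
  · rw [indicator_of_notMem ha]
    exact indicator_nonneg (fun _ _ => zero_le_one) b

theorem le_st.cdf_map_le {μ : Measure Ω} {ν : Measure Ω'} [IsProbabilityMeasure μ]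
    [IsProbabilityMeasure ν] {X : Ω → ℝ} {Y : Ω' → ℝ} (hX : Measurable X) (hY : Measurable Y)
    (h : le_st μ X ν Y) (x : ℝ) : cdf (ν.map Y) x ≤ cdf (μ.map X) x := by
  have := Measure.isProbabilityMeasure_map (μ := μ) hX.aemeasurable
  have := Measure.isProbabilityMeasure_map (μ := ν) hY.aemeasurable
  have tail := h _ (monotone_indicator_Ioi_one x)
    ((integrable_const (1 : ℝ)).indicator measurableSet_Ioi |>.comp_measurable hX)
    ((integrable_const (1 : ℝ)).indicator measurableSet_Ioi |>.comp_measurable hY)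
  have hind : Measurable ((Ioi x).indicator (1 : ℝ → ℝ)) :=
    measurable_const.indicator measurableSet_Ioi
  rw [← integral_map hX.aemeasurable hind.aestronglyMeasurable,
    ← integral_map hY.aemeasurable hind.aestronglyMeasurable,
    integral_indicator_one measurableSet_Ioi, integral_indicator_one measurableSet_Ioi,
    ← compl_Iic, measureReal_compl measurableSet_Iic, measureReal_compl measurableSet_Iic] at tail
  simp only [cdf_eq_real, probReal_univ] at tail ⊢
  linarith

theorem MeasureTheory.Measure.ext_of_Iic_pi {ι : Type*} [Finite ι] (P Q : Measure (ι → ℝ))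
    [IsProbabilityMeasure P] [IsProbabilityMeasure Q] (h : ∀ x, P (Iic x) = Q (Iic x)) :
    P = Q := by
  have hspan : IsCountablySpanning (range (Iic : ℝ → Set ℝ)) :=
    ⟨fun k : ℕ => Iic (k : ℝ), fun _ => mem_range_self _,
      eq_univ_of_forall fun y => mem_iUnion.2 (exists_nat_ge y)⟩
  have hgen : MeasurableSpace.pi = .generateFrom (pi univ '' pi univ fun _ : ι => range Iic) :=
    (generateFrom_eq_pi (fun _ => (borel_eq_generateFrom_Iic ℝ).symm.trans
      BorelSpace.measurable_eq.symm) fun _ => hspan).symm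
  refine ext_of_generate_finite _ hgen (IsPiSystem.pi fun _ => isPiSystem_Iic) ?_ (by simp)
  rintro _ ⟨s, hs, rfl⟩
  choose x hx using fun i => hs i (mem_univ i)
  obtain rfl : s = fun i => Iic (x i) := funext fun i => (hx i).symm
  rw [pi_univ_Iic]
  exact h x

theorem uniformMarginals.ae_mem_Ioo {n : ℕ} {P : Measure (Fin n → ℝ)} (hP : uniformMarginals P) :
    ∀ᵐ u ∂P, ∀ i, u i ∈ Ioo (0 : ℝ) 1 := by
  refine ae_all_iff.2 fun i => ae_of_ae_map (measurable_pi_apply i).aemeasurable ?_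
  rw [hP i, ← Measure.restrict_congr_set Ioo_ae_eq_Icc]
  exact ae_restrict_mem measurableSet_Ioo

theorem le_st_of_identDistrib_of_ae_le {S : Type*} [MeasurableSpace S] {μ : Measure Ω}
    {ν : Measure Ω'} {P : Measure S} {X : Ω → ℝ} {Y : Ω' → ℝ} {U V : S → ℝ}
    (hXU : IdentDistrib X U μ P) (hYV : IdentDistrib Y V ν P) (hUV : U ≤ᵐ[P] V) :
    le_st μ X ν Y := by
  intro f hf hfX hfY
  have hfU := hXU.comp hf.measurable
  have hfV := hYV.comp hf.measurable
  rw [← Function.comp_def, ← Function.comp_def, hfU.integral_eq, hfV.integral_eq]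
  exact integral_mono_ae (hfU.integrable_iff.1 hfX) (hfV.integrable_iff.1 hfY)
    (hUV.mono fun _ h => hf h)

theorem identDistrib_quantile_of_copula {n : ℕ} (μ : Measure Ω) [IsProbabilityMeasure μ]
    {X : Fin n → Ω → ℝ} (hXm : ∀ i, Measurable (X i)) {C : (Fin n → ℝ) → ℝ}
    (hXC : ∀ x, jointCDF μ X x = C fun i => distFun μ (X i) (x i))
    {P : Measure (Fin n → ℝ)} [IsProbabilityMeasure P] (hPU : uniformMarginals P)
    (hPC : ∀ x, C x = (P {u | ∀ i, u i ≤ x i}).toReal) :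
    IdentDistrib (fun ω i => X i ω)
      (fun (u : Fin n → ℝ) i => quantile (cdf (μ.map (X i))) (u i)) μ P := by
  have hXv : Measurable fun ω i => X i ω := measurable_pi_lambda _ hXm
  have hQv : Measurable fun (u : Fin n → ℝ) i => quantile (cdf (μ.map (X i))) (u i) :=
    measurable_pi_lambda _ fun i => (measurable_quantile _).comp (measurable_pi_apply i)
  refine ⟨hXv.aemeasurable, hQv.aemeasurable, ?_⟩
  have := Measure.isProbabilityMeasure_map (μ := μ) hXv.aemeasurable
  have := Measure.isProbabilityMeasure_map (μ := P) hQv.aemeasurable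
  refine Measure.ext_of_Iic_pi _ _ fun x => ?_
  have hpre : (fun u i => quantile (cdf (μ.map (X i))) (u i)) ⁻¹' Iic x
      =ᵐ[P] {u | ∀ i, u i ≤ distFun μ (X i) (x i)} := by
    filter_upwards [hPU.ae_mem_Ioo] with u hu
    simp only [eq_iff_iff, distFun_eq_cdf_map μ (hXm _)]
    exact forall_congr' fun i => quantile_le_iff _ (hu i) (x i)
  rw [Measure.map_apply hXv measurableSet_Iic, Measure.map_apply hQv measurableSet_Iic,
    measure_congr hpre, ← ENNReal.toReal_eq_toReal_iff' (measure_ne_top _ _) (measure_ne_top _ _),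
    ← hPC, ← hXC]
  rfl

/-- common copula and componentwise `≤_st` imply `≤_st` of the sums. -/
theorem sum_le_st_of_common_copula
    {n : ℕ} (μ : Measure Ω) (ν : Measure Ω')
    [IsProbabilityMeasure μ] [IsProbabilityMeasure ν]
    (X : Fin n → Ω → ℝ) (Y : Fin n → Ω' → ℝ)
    (hXm : ∀ i, Measurable (X i)) (hYm : ∀ i, Measurable (Y i))
    (C : (Fin n → ℝ) → ℝ)
    (hX : HasCopula μ X C) (hY : HasCopula ν Y C)
    (hst : ∀ i, le_st μ (X i) ν (Y i)) :
    le_st μ (fun ω => ∑ i, X i ω) ν (fun ω => ∑ i, Y i ω) := by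
  obtain ⟨⟨P, hP, hPU, hPC⟩, hXC⟩ := hX
  have hXU := identDistrib_quantile_of_copula μ hXm hXC hPU hPC
  have hYV := identDistrib_quantile_of_copula ν hYm hY.2 hPU hPC
  have hsum : Measurable fun p : Fin n → ℝ => ∑ i, p i := by fun_prop
  refine le_st_of_identDistrib_of_ae_le (hXU.comp hsum) (hYV.comp hsum) ?_
  filter_upwards [hPU.ae_mem_Ioo] with u hu
  exact Finset.sum_le_sum fun i _ =>
    quantile_le_quantile_of_cdf_le _ ((hst i).cdf_map_le (hXm i) (hYm i)) (hu i)
end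
end

section
/- If a random vector X = (X₁,…,Xₙ) is positively dependent through the stochastic ordering (PDS), then it is positive orthant dependent (POD): P(X ≤ x) ≥ ∏ᵢ P(Xᵢ ≤ xᵢ) and P(X > x) ≥ ∏ᵢ P(Xᵢ > xᵢ) for all x ∈ ℝⁿ. -/
open MeasureTheory ProbabilityTheory Set

noncomputable section

variable {Ω Ω' : Type*} [MeasurableSpace Ω] [MeasurableSpace Ω']

/-! If `P(S | X_i) = g(X_i)` with `g` increasing and `A_i` is an upper set, then
`P(X_i ∈ A_i, S) = E[1_{A_i}(X_i) g(X_i)] ≥ P(X_i ∈ A_i) P(S)` by Chebyshev's inequality for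
two increasing functions of one variable. Taking for `S` the event that the coordinates in `s`
lie in their upper sets, PDS supplies such a `g`, and induction on `s` gives the upper orthant
bound. The lower orthant bound is the upper one for `-X`, which is again PDS. -/

theorem Monovary.integral_mul_integral_le_integral_mul {μ : Measure Ω} [IsProbabilityMeasure μ]
    {U V : Ω → ℝ} (hUV : Monovary U V) (hU : Integrable U μ) (hV : Integrable V μ)
    (hUVi : Integrable (fun ω => U ω * V ω) μ) :
    (∫ ω, U ω ∂μ) * (∫ ω, V ω ∂μ) ≤ ∫ ω, U ω * V ω ∂μ := by
  have inner (ω : Ω) : ∫ ω', (U ω' - U ω) * (V ω' - V ω) ∂μ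
      = (∫ ω', U ω' * V ω' ∂μ) - U ω * ∫ ω', V ω' ∂μ - V ω * ∫ ω', U ω' ∂μ + U ω * V ω := by
    simp_rw [sub_mul, mul_sub]
    rw [integral_sub, integral_sub, integral_sub, integral_mul_const, integral_const_mul]
    all_goals first | fun_prop | simp
    ring
  have outer : ∫ ω, ∫ ω', (U ω' - U ω) * (V ω' - V ω) ∂μ ∂μ
      = 2 * ((∫ ω, U ω * V ω ∂μ) - (∫ ω, U ω ∂μ) * ∫ ω, V ω ∂μ) := by
    simp_rw [inner]
    rw [integral_add, integral_sub, integral_sub, integral_mul_const, integral_mul_const]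
    all_goals first | fun_prop | simp
    ring
  have nonneg : 0 ≤ ∫ ω, ∫ ω', (U ω' - U ω) * (V ω' - V ω) ∂μ ∂μ :=
    integral_nonneg fun ω => integral_nonneg fun ω' => hUV.sub_mul_sub_nonneg ω ω'
  linarith

theorem IsUpperSet.monotone_indicator {α M : Type*} [Preorder α] [Preorder M] [Zero M]
    {B : Set α} (hB : IsUpperSet B) {f : α → M} (hf : Monotone f) (hf₀ : 0 ≤ f) :
    Monotone (B.indicator f) := by
  intro a b hab
  by_cases ha : a ∈ B
  · simpa [indicator_of_mem ha, indicator_of_mem (hB hab ha)] using hf hab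
  · rw [indicator_of_notMem ha]
    exact indicator_nonneg (fun x _ => hf₀ x) b

theorem measureReal_preimage_mul_le_of_condExp_monotone {μ : Measure Ω} [IsProbabilityMeasure μ]
    {Z : Ω → ℝ} (hZ : Measurable Z) {A : Set ℝ} (hA : MeasurableSet A) (hAu : IsUpperSet A)
    {S : Set Ω} (hS : MeasurableSet S) {g : ℝ → ℝ} (hg : Monotone g)
    (hcond : μ[S.indicator 1 | MeasurableSpace.comap Z (borel ℝ)] =ᵐ[μ] g ∘ Z) :
    μ.real (Z ⁻¹' A) * μ.real S ≤ μ.real (Z ⁻¹' A ∩ S) := by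
  have hm : MeasurableSpace.comap Z (borel ℝ) ≤ ‹MeasurableSpace Ω› := hZ.comap_le
  have hT : MeasurableSet (Z ⁻¹' A) := hZ hA
  have hV : Integrable (g ∘ Z) μ := integrable_condExp.congr hcond
  have hmonovary : Monovary ((Z ⁻¹' A).indicator 1) (g ∘ Z) := fun ω ω' h =>
    (hAu.monotone_indicator (f := 1) (fun _ _ _ => le_refl (1 : ℝ)) zero_le_one).monovary hg h
  have hprod : (fun ω => (Z ⁻¹' A).indicator 1 ω * (g ∘ Z) ω) = (Z ⁻¹' A).indicator (g ∘ Z) := by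
    ext ω; by_cases h : ω ∈ Z ⁻¹' A <;> simp [h]
  calc μ.real (Z ⁻¹' A) * μ.real S
      = (∫ ω, (Z ⁻¹' A).indicator 1 ω ∂μ) * ∫ ω, (g ∘ Z) ω ∂μ := by
        rw [integral_indicator_one hT, integral_congr_ae hcond.symm, integral_condExp hm,
          integral_indicator_one hS]
    _ ≤ ∫ ω, (Z ⁻¹' A).indicator 1 ω * (g ∘ Z) ω ∂μ :=
        hmonovary.integral_mul_integral_le_integral_mul ((integrable_const 1).indicator hT) hV
          (by rw [hprod]; exact hV.indicator hT)
    _ = ∫ ω in Z ⁻¹' A, μ[S.indicator 1 | MeasurableSpace.comap Z (borel ℝ)] ω ∂μ := by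
        rw [hprod, integral_indicator hT]
        exact setIntegral_congr_ae hT (hcond.mono fun ω h _ => h.symm)
    _ = μ.real (Z ⁻¹' A ∩ S) := by
        rw [setIntegral_condExp hm ((integrable_const 1).indicator hS) ⟨A, hA, rfl⟩,
          integral_indicator_one hS, measureReal_restrict_apply hS, inter_comm]

theorem MeasurableSpace.comap_neg_borel {α : Type*} (Y : α → ℝ) :
    MeasurableSpace.comap (fun a => -Y a) (borel ℝ) = MeasurableSpace.comap Y (borel ℝ) := by
  rw [← BorelSpace.measurable_eq, show (fun a => -Y a) = Neg.neg ∘ Y from rfl,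
    ← MeasurableSpace.comap_comp]
  exact congrArg _ (MeasurableEquiv.neg ℝ).measurableEmbedding.comap_eq

namespace PDS

variable {μ : Measure Ω} {n : ℕ} {X : Fin n → Ω → ℝ}

theorem neg (h : PDS μ X) : PDS μ (fun i ω => -X i ω) := by
  intro i f hf hdep
  obtain ⟨g, hg, hae⟩ := h i (fun u => -f (-u)) (fun u v huv => neg_le_neg (hf (neg_le_neg huv)))
    (fun a b hab => by rw [hdep (-a) (-b) fun j hj => by simp [hab j hj]])
  refine ⟨fun t => -g (-t), fun a b hab => neg_le_neg (hg (neg_le_neg hab)), ?_⟩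
  have hf_neg : (fun ω => f fun j => -X j ω) = -fun ω => -f (-fun j => X j ω) :=
    funext fun ω => (neg_neg _).symm
  rw [MeasurableSpace.comap_neg_borel, hf_neg]
  filter_upwards [condExp_neg (μ := μ) (m := MeasurableSpace.comap (X i) (borel ℝ))
    (fun ω => -f (-fun j => X j ω)), hae] with ω hneg hω
  rw [hneg, Pi.neg_apply, hω, neg_neg]

theorem exists_monotone_condExp_indicator (hPDS : PDS μ X) {A : Fin n → Set ℝ}
    (hA : ∀ i, IsUpperSet (A i)) {i : Fin n} {s : Finset (Fin n)} (hi : i ∉ s) :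
    ∃ g : ℝ → ℝ, Monotone g ∧ μ[{ω | ∀ j ∈ s, X j ω ∈ A j}.indicator 1 |
      MeasurableSpace.comap (X i) (borel ℝ)] =ᵐ[μ] g ∘ X i := by
  have hB : IsUpperSet {u : Fin n → ℝ | ∀ j ∈ s, u j ∈ A j} :=
    fun u v huv hu j hj => hA j (huv j) (hu j hj)
  have hindep (a b : Fin n → ℝ) (hab : ∀ j, j ≠ i → a j = b j) :
      ({u | ∀ j ∈ s, u j ∈ A j}.indicator 1 a : ℝ) = {u | ∀ j ∈ s, u j ∈ A j}.indicator 1 b := by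
    have hmem : (∀ j ∈ s, a j ∈ A j) ↔ ∀ j ∈ s, b j ∈ A j :=
      forall₂_congr fun j hj => by rw [hab j (ne_of_mem_of_not_mem hj hi)]
    classical
    simp only [indicator_apply, mem_ofPred_eq, hmem, Pi.one_apply]
  exact hPDS i _ (hB.monotone_indicator (fun _ _ _ => le_refl (1 : ℝ)) zero_le_one) hindep

theorem prod_measureReal_preimage_le [IsProbabilityMeasure μ] (hPDS : PDS μ X)
    (hX : ∀ i, Measurable (X i)) {A : Fin n → Set ℝ} (hAm : ∀ i, MeasurableSet (A i))
    (hA : ∀ i, IsUpperSet (A i)) (s : Finset (Fin n)) :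
    ∏ i ∈ s, μ.real (X i ⁻¹' A i) ≤ μ.real {ω | ∀ i ∈ s, X i ω ∈ A i} := by
  induction s using Finset.induction with
  | empty => simp
  | @insert i s hi ih =>
    have hS : MeasurableSet {ω | ∀ j ∈ s, X j ω ∈ A j} := by
      convert Finset.measurableSet_biInter s fun j _ => hX j (hAm j) using 1
      ext ω; simp
    obtain ⟨g, hg, hcond⟩ := hPDS.exists_monotone_condExp_indicator hA hi
    have hinsert : {ω | ∀ j ∈ insert i s, X j ω ∈ A j}
        = X i ⁻¹' A i ∩ {ω | ∀ j ∈ s, X j ω ∈ A j} := by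
      ext ω; simp
    rw [Finset.prod_insert hi, hinsert]
    calc μ.real (X i ⁻¹' A i) * ∏ j ∈ s, μ.real (X j ⁻¹' A j)
        ≤ μ.real (X i ⁻¹' A i) * μ.real {ω | ∀ j ∈ s, X j ω ∈ A j} := by gcongr
      _ ≤ _ := measureReal_preimage_mul_le_of_condExp_monotone (hX i) (hAm i) (hA i) hS hg hcond

end PDS

/-- PDS implies POD. -/
theorem POD_of_PDS
    {n : ℕ} (μ : Measure Ω) [IsProbabilityMeasure μ]
    (X : Fin n → Ω → ℝ) (hXm : ∀ i, Measurable (X i))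
    (hPDS : PDS μ X) : POD μ X := by
  intro x
  constructor
  · simpa [Measure.real, preimage] using hPDS.neg.prod_measureReal_preimage_le
      (fun i => (hXm i).neg) (fun i => measurableSet_Ici (a := -x i)) (fun i => isUpperSet_Ici _)
      Finset.univ
  · simpa [Measure.real, preimage] using hPDS.prod_measureReal_preimage_le hXm
      (fun i => measurableSet_Ioi (a := x i)) (fun i => isUpperSet_Ioi _) Finset.univ
end
end

section
/- Suppose n insurers use VaR with levels α₁,…,αₙ, the reinsurer's premium principle π is consistent with the usual stochastic order, and f₁,…,fₙ are arbitrary ceded loss functions. Define hᵢ(x) = min{(x - (VaR_{αᵢ}(Xᵢ) - fᵢ(VaR_{αᵢ}(Xᵢ))))₊, fᵢ(VaR_{αᵢ}(Xᵢ))}. Then Σᵢ VaR_{αᵢ}(Xᵢ - hᵢ(Xᵢ)) + π(Σᵢ hᵢ(Xᵢ)) ≤ Σᵢ VaR_{αᵢ}(Xᵢ - fᵢ(Xᵢ)) + π(Σᵢ fᵢ(Xᵢ)). -/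
open MeasureTheory ProbabilityTheory Set

noncomputable section

variable {Ω Ω' : Type*} [MeasurableSpace Ω] [MeasurableSpace Ω']

lemma distFun_mono (μ : Measure Ω) [IsProbabilityMeasure μ] (X : Ω → ℝ) : Monotone (distFun μ X) := fun a b hab =>
  ENNReal.toReal_mono (measure_ne_top μ _) (measure_mono fun ω h => le_trans h hab)
lemma distFun_le_distFun (μ : Measure Ω) [IsProbabilityMeasure μ] {X Y : Ω → ℝ} (hXY : ∀ ω, Y ω ≤ X ω) (x : ℝ) :
    distFun μ X x ≤ distFun μ Y x :=
  ENNReal.toReal_mono (measure_ne_top μ _) (measure_mono fun ω h => le_trans (hXY ω) h)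
lemma exists_distFun_ge (μ : Measure Ω) [IsProbabilityMeasure μ] (X : Ω → ℝ) (hX : Measurable X) {c : ℝ} (hc : c < 1) :
    ∃ x, c ≤ distFun μ X x := by
  rcases le_or_gt c 0 with hc0 | hc0
  · exact ⟨0, hc0.trans ENNReal.toReal_nonneg⟩
  have hmono : Monotone fun n : ℕ => {ω | X ω ≤ (n : ℝ)} := by
    intro m n hmn ω hω
    simp only [Set.mem_setOf_eq] at hω ⊢
    exact le_trans hω (Nat.cast_le.mpr hmn)
  have hU : (⋃ n : ℕ, {ω | X ω ≤ (n : ℝ)}) = Set.univ := by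
    ext ω
    simp only [Set.mem_iUnion, Set.mem_univ, iff_true, Set.mem_setOf_eq]
    exact exists_nat_ge (X ω)
  have ht : Filter.Tendsto (fun n : ℕ => μ {ω | X ω ≤ (n : ℝ)}) Filter.atTop (nhds 1) := by
    have := tendsto_measure_iUnion_atTop (μ := μ) hmono
    rwa [hU, measure_univ] at this
  have hlt : ENNReal.ofReal c < 1 := by
    rw [← ENNReal.ofReal_one]
    exact (ENNReal.ofReal_lt_ofReal_iff_of_nonneg hc0.le).mpr hc
  obtain ⟨n, hn⟩ := (ht.eventually_const_lt hlt).exists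
  exact ⟨n, (ENNReal.ofReal_le_iff_le_toReal (measure_ne_top μ _)).mp hn.le⟩
lemma le_distFun_VaR (μ : Measure Ω) [IsProbabilityMeasure μ] (X : Ω → ℝ) (hX : Measurable X) {α : ℝ} (hα0 : 0 < α) (hα1 : α < 1) :
    1 - α ≤ distFun μ X (VaR μ X α) := by
  set c := 1 - α with hc
  have hc1 : c < 1 := by simp only [hc]; linarith
  have hne : {x | c ≤ distFun μ X x}.Nonempty := exists_distFun_ge μ X hX hc1
  set v := VaR μ X α with hv
  have hεS : ∀ ε : ℝ, 0 < ε → c ≤ distFun μ X (v + ε) := by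
    intro ε hε
    obtain ⟨s, hsS, hs⟩ := exists_lt_of_csInf_lt hne (lt_add_of_pos_right v hε)
    exact le_trans hsS (distFun_mono μ X hs.le)
  have hset : {ω | X ω ≤ v} = ⋂ n : ℕ, {ω | X ω ≤ v + 1 / (n + 1)} := by
    ext ω
    simp only [Set.mem_setOf_eq, Set.mem_iInter]
    constructor
    · intro hle n
      have : (0:ℝ) < 1 / (n + 1) := by positivity
      linarith
    · intro hall
      by_contra hgt
      push_neg at hgt
      obtain ⟨n, hn⟩ := exists_nat_one_div_lt (sub_pos.mpr hgt)
      have := hall n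
      linarith
  have hAnti : Antitone fun n : ℕ => {ω | X ω ≤ v + 1 / (n + 1)} := by
    intro m n hmn ω hω
    have h1 : (1:ℝ) / (n + 1) ≤ 1 / (m + 1) := by
      apply one_div_le_one_div_of_le (by positivity)
      have := (Nat.cast_le (α := ℝ)).mpr hmn
      linarith
    simp only [Set.mem_setOf_eq] at hω ⊢
    linarith
  have hmeas : ∀ n : ℕ, NullMeasurableSet {ω | X ω ≤ v + 1 / (n + 1)} μ := fun n =>
    (hX measurableSet_Iic).nullMeasurableSet
  have ht := tendsto_measure_iInter_atTop (μ := μ) hmeas hAnti ⟨0, measure_ne_top μ _⟩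
  have hev : ∀ n : ℕ, ENNReal.ofReal c ≤ μ {ω | X ω ≤ v + 1 / (n + 1)} := fun n =>
    (ENNReal.ofReal_le_iff_le_toReal (measure_ne_top μ _)).mpr (hεS _ (by positivity))
  have hlim : ENNReal.ofReal c ≤ μ (⋂ n : ℕ, {ω | X ω ≤ v + 1 / (n + 1)}) :=
    ge_of_tendsto' ht hev
  rw [← hset] at hlim
  exact (ENNReal.ofReal_le_iff_le_toReal (measure_ne_top μ _)).mp hlim
lemma VaR_one (μ : Measure Ω) (X : Ω → ℝ) : VaR μ X 1 = 0 := by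
  have huniv : {x | 1 - 1 ≤ distFun μ X x} = Set.univ := by
    ext x
    simp only [Set.mem_setOf_eq, Set.mem_univ, iff_true, sub_self]
    exact ENNReal.toReal_nonneg
  rw [VaR, huniv, Real.sInf_of_not_bddBelow]
  rintro ⟨x, hx⟩
  have h1 : x ≤ x - 1 := hx (Set.mem_univ (x - 1))
  linarith

/-- the layer treaties `hᵢ` improve the aggregate objective when all
insurers use Value-at-Risk and the premium principle is consistent with `≤_st`. -/
theorem layer_improves_VaR_objective
    {n : ℕ} (μ : Measure Ω) [IsProbabilityMeasure μ]
    (X : Fin n → Ω → ℝ) (hXm : ∀ i, Measurable (X i))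
    (hX0 : ∀ i ω, 0 ≤ X i ω) (hXi : ∀ i, Integrable (X i) μ)
    (α : Fin n → ℝ) (hα : ∀ i, α i ∈ Ioc (0:ℝ) 1)
    (f : Fin n → ℝ → ℝ) (hf : ∀ i, Ceded (f i))
    (π : (Ω → ℝ) → ℝ)
    (hπ : ∀ W Z : Ω → ℝ, le_st μ W μ Z → π W ≤ π Z)
    (h : Fin n → ℝ → ℝ)
    (hdef : ∀ i x, h i x =
      layer (VaR μ (X i) (α i) - f i (VaR μ (X i) (α i))) (f i (VaR μ (X i) (α i))) x) :
    (∑ i, VaR μ (fun ω => X i ω - h i (X i ω)) (α i)) + π (fun ω => ∑ i, h i (X i ω))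
      ≤ (∑ i, VaR μ (fun ω => X i ω - f i (X i ω)) (α i))
          + π (fun ω => ∑ i, f i (X i ω)) := by
  
  have hα0 : ∀ i, 0 < α i := fun i => (hα i).1
  -- nonnegativity of VaR (for α < 1)
  have hSb : ∀ i, 1 - α i > 0 → ∀ x ∈ {x | 1 - α i ≤ distFun μ (X i) x}, (0:ℝ) ≤ x := by
    intro i hc x hx
    by_contra hneg
    push_neg at hneg
    have hemp : {ω | X i ω ≤ x} = ∅ := by
      ext ω
      simp only [Set.mem_setOf_eq, Set.mem_empty_iff_false, iff_false, not_le]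
      exact lt_of_lt_of_le hneg (hX0 i ω)
    simp only [Set.mem_setOf_eq, distFun, hemp, measure_empty, ENNReal.toReal_zero] at hx
    linarith
  have hv0 : ∀ i, 0 ≤ VaR μ (X i) (α i) := by
    intro i
    rcases lt_or_eq_of_le (hα i).2 with h1 | h1
    · have hc : (0:ℝ) < 1 - α i := by linarith
      exact le_csInf (exists_distFun_ge μ (X i) (hXm i) (by linarith [hα0 i])) (hSb i hc)
    · rw [h1, VaR_one]
  -- pointwise h ≤ f on nonnegatives
  have hpt : ∀ i x, 0 ≤ x → h i x ≤ f i x := by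
    intro i x hx
    set v := VaR μ (X i) (α i) with hvdef
    have hfv := (hf i).2.2 v (hv0 i)
    rw [hdef]
    rcases le_or_gt x v with hxv | hxv
    · refine le_trans (min_le_left _ _) (max_le ?_ ((hf i).2.2 x hx).1)
      have := (hf i).2.1 hxv
      simp only at this
      linarith
    · exact le_trans (min_le_right _ _) ((hf i).1 hxv.le)
  -- pointwise h x ≤ x on nonnegatives
  have hpt0 : ∀ i x, 0 ≤ x → h i x ≤ x := by
    intro i x hx
    have hfv := (hf i).2.2 _ (hv0 i)
    rw [hdef]
    exact le_trans (min_le_left _ _) (max_le (by linarith) hx)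
  -- per-index VaR inequality
  have key : ∀ i, VaR μ (fun ω => X i ω - h i (X i ω)) (α i)
      ≤ VaR μ (fun ω => X i ω - f i (X i ω)) (α i) := by
    intro i
    rcases lt_or_eq_of_le (hα i).2 with h1 | h1
    · set v := VaR μ (X i) (α i) with hvdef
      set b := f i v with hbdef
      set d := v - b with hddef
      have hfv := (hf i).2.2 v (hv0 i)
      have hb0 : 0 ≤ b := hfv.1
      have hd0 : 0 ≤ d := by simp only [hddef]; linarith [hfv.2]
      have hc : (0:ℝ) < 1 - α i := by linarith
      have hne : {x | 1 - α i ≤ distFun μ (X i) x}.Nonempty :=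
        exists_distFun_ge μ (X i) (hXm i) (by linarith [hα0 i])
      have hbdd : BddBelow {x | 1 - α i ≤ distFun μ (X i) x} := ⟨0, hSb i hc⟩
      have hcdfv : 1 - α i ≤ distFun μ (X i) v := le_distFun_VaR μ (X i) (hXm i) (hα0 i) h1
      have step1 : VaR μ (fun ω => X i ω - h i (X i ω)) (α i) ≤ d := by
        rw [VaR]
        apply csInf_le
        · refine ⟨0, fun x hx => ?_⟩
          by_contra hneg
          push_neg at hneg
          have hemp : {ω | X i ω - h i (X i ω) ≤ x} = ∅ := by
            ext ω
            simp only [Set.mem_setOf_eq, Set.mem_empty_iff_false, iff_false, not_le]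
            have h1' := hpt0 i (X i ω) (hX0 i ω)
            have h2' := hX0 i ω
            have h3' : 0 ≤ X i ω - h i (X i ω) := by linarith
            linarith
          simp only [Set.mem_setOf_eq, distFun, hemp, measure_empty, ENNReal.toReal_zero] at hx
          linarith
        · show 1 - α i ≤ distFun μ (fun ω => X i ω - h i (X i ω)) d
          refine le_trans hcdfv (ENNReal.toReal_mono (measure_ne_top μ _) (measure_mono ?_))
          intro ω hω
          simp only [Set.mem_setOf_eq] at hω ⊢
          have hmax : max (X i ω - d) 0 ≤ b := max_le (by linarith) hb0
          rw [hdef, layer, min_eq_left hmax]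
          have := le_max_left (X i ω - d) 0
          linarith
      have step2 : d ≤ VaR μ (fun ω => X i ω - f i (X i ω)) (α i) := by
        rw [VaR]
        apply le_csInf
        · obtain ⟨x0, hx0⟩ := hne
          refine ⟨x0, le_trans hx0 (distFun_le_distFun μ (fun ω => ?_) x0)⟩
          have := ((hf i).2.2 (X i ω) (hX0 i ω)).1
          linarith
        · intro x hx
          by_contra hxd
          push_neg at hxd
          have hsub : {ω | X i ω - f i (X i ω) ≤ x} ⊆ {ω | X i ω ≤ x + b} := by
            intro ω hω
            simp only [Set.mem_setOf_eq] at hω ⊢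
            rcases le_or_gt (X i ω) v with hle | hlt
            · have hm := (hf i).1 hle
              linarith
            · have hm := (hf i).2.1 hlt.le
              simp only at hm
              exfalso
              have : d ≤ x := le_trans hm hω
              linarith
          have hFle : distFun μ (fun ω => X i ω - f i (X i ω)) x ≤ distFun μ (X i) (x + b) :=
            ENNReal.toReal_mono (measure_ne_top μ _) (measure_mono hsub)
          have hnotin : x + b ∉ {y | 1 - α i ≤ distFun μ (X i) y} := by
            intro hmem
            have := csInf_le hbdd hmem
            have hvle : v ≤ x + b := this
            simp only [hddef] at hxd
            linarith
          simp only [Set.mem_setOf_eq, not_le] at hnotin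
          simp only [Set.mem_setOf_eq] at hx
          linarith
      exact le_trans step1 step2
    · rw [h1, VaR_one, VaR_one]
  -- premium part
  have hπle : π (fun ω => ∑ i, h i (X i ω)) ≤ π (fun ω => ∑ i, f i (X i ω)) := by
    apply hπ
    intro g hg hgW hgZ
    apply integral_mono hgW hgZ
    intro ω
    exact hg (Finset.sum_le_sum fun i _ => hpt i (X i ω) (hX0 i ω))
  exact add_le_add (Finset.sum_le_sum fun i _ => key i) hπle
end
end
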